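/- arXiv:1306.1771 — 15 statements merged into one kernel-verified Lean document; each statement's English description precedes it below -/
import Mathlib

section
/- Let X be a real Hilbert space and let T₁ : X → X and T₂ : X → X be nonexpansive maps. Then inf_{x ∈ X} ‖x − T₁(T₂ x)‖ = inf_{x ∈ X} ‖x − T₂(T₁ x)‖; consequently, the infimal displacement vectors of the compositions T₁ ∘ T₂ and T₂ ∘ T₁ have equal norms. -/
open scoped RealInnerProductSpace

lemma minNorm_eq_iInf {X : Type*} [NormedAddCommGroup X] (g : X → X) (v : X)
    (hmem : v ∈ closure (Set.range fun x => x - g x))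
    (hmin : ∀ u ∈ closure (Set.range fun x => x - g x), ‖v‖ ≤ ‖u‖) :
    ‖v‖ = ⨅ x : X, ‖x - g x‖ := by
  have hbdd : BddBelow (Set.range fun x : X => ‖x - g x‖) :=
    ⟨0, by rintro a ⟨x, rfl⟩; exact norm_nonneg _⟩
  refine le_antisymm (le_ciInf fun x => hmin _ (subset_closure (Set.mem_range_self x))) ?_
  refine le_of_forall_pos_le_add fun ε hε => ?_
  obtain ⟨u, hu, hdu⟩ := Metric.mem_closure_iff.mp hmem ε hε
  obtain ⟨x, rfl⟩ := hu
  calc (⨅ x : X, ‖x - g x‖) ≤ ‖x - g x‖ := ciInf_le hbdd x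
    _ ≤ ‖v‖ + ε := by
        have h := norm_sub_norm_le (x - g x) v
        rw [dist_comm, dist_eq_norm] at hdu
        linarith

/-- For nonexpansive `T₁ T₂ : X → X` on a real Hilbert space,
`inf ‖x - T₁ (T₂ x)‖ = inf ‖x - T₂ (T₁ x)‖`; consequently the infimal displacement
vectors of `T₁ ∘ T₂` and `T₂ ∘ T₁` have equal norms. -/
theorem stmt0 {X : Type*} [NormedAddCommGroup X] [InnerProductSpace ℝ X] [CompleteSpace X]
    (T₁ T₂ : X → X)
    (h₁ : ∀ x y : X, ‖T₁ x - T₁ y‖ ≤ ‖x - y‖)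
    (h₂ : ∀ x y : X, ‖T₂ x - T₂ y‖ ≤ ‖x - y‖) :
    (⨅ x : X, ‖x - T₁ (T₂ x)‖) = (⨅ x : X, ‖x - T₂ (T₁ x)‖) ∧
    ∀ v₁ v₂ : X,
      (v₁ ∈ closure (Set.range fun x => x - T₁ (T₂ x)) ∧
        ∀ u ∈ closure (Set.range fun x => x - T₁ (T₂ x)), ‖v₁‖ ≤ ‖u‖) →
      (v₂ ∈ closure (Set.range fun x => x - T₂ (T₁ x)) ∧
        ∀ u ∈ closure (Set.range fun x => x - T₂ (T₁ x)), ‖v₂‖ ≤ ‖u‖) →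
      ‖v₁‖ = ‖v₂‖ := by
  have hbdd1 : BddBelow (Set.range fun x : X => ‖x - T₁ (T₂ x)‖) :=
    ⟨0, by rintro a ⟨x, rfl⟩; exact norm_nonneg _⟩
  have hbdd2 : BddBelow (Set.range fun x : X => ‖x - T₂ (T₁ x)‖) :=
    ⟨0, by rintro a ⟨x, rfl⟩; exact norm_nonneg _⟩
  have key : (⨅ x : X, ‖x - T₁ (T₂ x)‖) = ⨅ x : X, ‖x - T₂ (T₁ x)‖ := by
    refine le_antisymm (le_ciInf fun x => ?_) (le_ciInf fun x => ?_)
    · exact le_trans (ciInf_le hbdd1 (T₁ x)) (h₁ x (T₂ (T₁ x)))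
    · exact le_trans (ciInf_le hbdd2 (T₂ x)) (h₂ x (T₁ (T₂ x)))
  refine ⟨key, fun v₁ v₂ hv₁ hv₂ => ?_⟩
  rw [minNorm_eq_iInf _ _ hv₁.1 hv₁.2, minNorm_eq_iInf _ _ hv₂.1 hv₂.2, key]
end

section
/- Let X be a real Hilbert space, let α ≥ 0, and let A : X → X be a continuous linear operator such that both A and −A are monotone (equivalently, ⟨A x, x⟩ = 0 for all x ∈ X) and A ∘ A = −α · Id. Then the map x ↦ (1+α)⁻¹ (x − A x) is a two-sided inverse of Id + A; consequently the resolvent J_A = (Id + A)⁻¹ is the everywhere-defined single-valued map J_A = (1+α)⁻¹ (Id − A), and the reflected resolvent R_A = 2 J_A − Id satisfies R_A = ((1−α)/(1+α)) Id − (2/(1+α)) A. -/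
open scoped RealInnerProductSpace

/-- If `A : X → X` is continuous linear with `A` and `-A` monotone and
`A ∘ A = -α • Id` (`α ≥ 0`), then `x ↦ (1+α)⁻¹ • (x - A x)` is a two-sided inverse of
`Id + A`, so `J_A = (1+α)⁻¹ (Id - A)` and `R_A = 2 J_A - Id = ((1-α)/(1+α)) Id - (2/(1+α)) A`. -/
theorem stmt1 {X : Type*} [NormedAddCommGroup X] [InnerProductSpace ℝ X] [CompleteSpace X]
    (α : ℝ) (hα : 0 ≤ α) (A : X →L[ℝ] X)
    (hmono : ∀ x y : X, 0 ≤ ⟪x - y, A x - A y⟫)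
    (hmono' : ∀ x y : X, 0 ≤ ⟪x - y, (-(A x)) - (-(A y))⟫)
    (hA2 : ∀ x : X, A (A x) = -(α • x)) :
    (∀ x : X, ((1 + α)⁻¹ • (x - A x)) + A ((1 + α)⁻¹ • (x - A x)) = x) ∧
    (∀ x : X, (1 + α)⁻¹ • ((x + A x) - A (x + A x)) = x) ∧
    (∀ x : X, 2 • ((1 + α)⁻¹ • (x - A x)) - x
        = ((1 - α) / (1 + α)) • x - (2 / (1 + α)) • A x) := by
  have h0 : (1 : ℝ) + α ≠ 0 := by positivity
  refine ⟨fun x => ?_, fun x => ?_, fun x => ?_⟩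
  · rw [map_smul, map_sub, hA2, ← smul_add]
    have : x - A x + (A x - -(α • x)) = (1 + α) • x := by
      module
    rw [this, smul_smul, inv_mul_cancel₀ h0, one_smul]
  · rw [map_add, hA2]
    have : x + A x - (A x + -(α • x)) = (1 + α) • x := by
      module
    rw [this, smul_smul, inv_mul_cancel₀ h0, one_smul]
  · match_scalars <;> field_simp <;> ring
end

section
/- Let X be a real Hilbert space, let A, B : X ⇉ X be monotone set-valued operators with total resolvent selections J_A, J_B, and let T x = J_A(2 J_B x − x) + x − J_B x be the Douglas–Rachford operator of (A,B). Then {(x, x − T x) : x ∈ X} = {(b + b*, b − a) : a, a*, b, b* ∈ X, a* ∈ A a, b* ∈ B b, b − a = a* + b*}. Consequently, the range of Id − T is contained in (dom B − dom A) ∩ (ran A + ran B), where dom A = {x : A x ≠ ∅} and ran A = ⋃_x A x. -/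
open scoped RealInnerProductSpace

lemma resolvent_unique {X : Type*} [NormedAddCommGroup X] [InnerProductSpace ℝ X]
    (A : X → Set X)
    (hA : ∀ x y x' y' : X, x' ∈ A x → y' ∈ A y → 0 ≤ ⟪x - y, x' - y'⟫)
    {x u v : X} (hu : x - u ∈ A u) (hv : x - v ∈ A v) : u = v := by
  have h := hA u v (x - u) (x - v) hu hv
  have heq : ((x - u) - (x - v)) = -(u - v) := by abel
  rw [heq, inner_neg_right] at h
  have h3 : ⟪u - v, u - v⟫ ≤ 0 := by linarith
  exact sub_eq_zero.mp (real_inner_self_nonpos.mp h3)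

/-- Graph of `Id - T` for the Douglas–Rachford operator `T` of a pair of
monotone set-valued operators `(A,B)` with total resolvent selections, and the consequent
inclusion `ran (Id - T) ⊆ (dom B - dom A) ∩ (ran A + ran B)`. -/
theorem stmt2 {X : Type*} [NormedAddCommGroup X] [InnerProductSpace ℝ X] [CompleteSpace X]
    (A B : X → Set X)
    (hA : ∀ x y x' y' : X, x' ∈ A x → y' ∈ A y → 0 ≤ ⟪x - y, x' - y'⟫)
    (hB : ∀ x y x' y' : X, x' ∈ B x → y' ∈ B y → 0 ≤ ⟪x - y, x' - y'⟫)
    (JA JB : X → X)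
    (hJA : ∀ x : X, x - JA x ∈ A (JA x)) (hJB : ∀ x : X, x - JB x ∈ B (JB x))
    (T : X → X) (hT : ∀ x : X, T x = JA (2 • JB x - x) + x - JB x) :
    ({p : X × X | ∃ x : X, p = (x, x - T x)}
        = {p : X × X | ∃ a a' b b' : X, a' ∈ A a ∧ b' ∈ B b ∧ b - a = a' + b' ∧
            p = (b + b', b - a)}) ∧
    ({y : X | ∃ x : X, y = x - T x}
        ⊆ {d : X | ∃ b a : X, B b ≠ ∅ ∧ A a ≠ ∅ ∧ d = b - a}
          ∩ {s : X | ∃ a' b' : X, a' ∈ (⋃ x : X, A x) ∧ b' ∈ (⋃ x : X, B x) ∧ s = a' + b'}) := by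
  have key : ({p : X × X | ∃ x : X, p = (x, x - T x)}
      = {p : X × X | ∃ a a' b b' : X, a' ∈ A a ∧ b' ∈ B b ∧ b - a = a' + b' ∧
          p = (b + b', b - a)}) := by
    ext p
    constructor
    · rintro ⟨x, rfl⟩
      refine ⟨JA (2 • JB x - x), (2 • JB x - x) - JA (2 • JB x - x), JB x, x - JB x,
        hJA _, hJB _, ?_, ?_⟩
      · rw [two_smul]; abel
      · rw [hT x, two_smul, Prod.mk.injEq]
        exact ⟨by abel, by abel⟩
    · rintro ⟨a, a', b, b', ha, hb, hsum, rfl⟩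
      refine ⟨b + b', ?_⟩
      have hJBx : JB (b + b') = b := by
        refine (resolvent_unique B hB (hJB (b + b')) ?_).symm ▸ rfl
        · show (b + b') - b ∈ B b
          simpa using hb
      have hy : (2 • JB (b + b') - (b + b')) = b - b' := by rw [hJBx, two_smul]; abel
      have hJAy : JA (2 • JB (b + b') - (b + b')) = a := by
        rw [hy]
        refine resolvent_unique A hA (hJA (b - b')) ?_
        have heq : (b - b') - a = a' :=
          calc b - b' - a = (b - a) - b' := by abel
            _ = a' := by rw [hsum]; abel
        rw [heq]; exact ha
      rw [Prod.mk.injEq]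
      refine ⟨rfl, ?_⟩
      rw [hT, hJAy, hJBx]
      abel
  refine ⟨key, ?_⟩
  intro y hy
  obtain ⟨x, rfl⟩ := hy
  have : (x, x - T x) ∈ {p : X × X | ∃ a a' b b' : X, a' ∈ A a ∧ b' ∈ B b ∧ b - a = a' + b' ∧
      p = (b + b', b - a)} := key ▸ ⟨x, rfl⟩
  obtain ⟨a, a', b, b', ha, hb, hsum, hp⟩ := this
  have h2 : x - T x = b - a := congrArg Prod.snd hp
  constructor
  · exact ⟨b, a, Set.nonempty_iff_ne_empty.mp ⟨b', hb⟩,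
      Set.nonempty_iff_ne_empty.mp ⟨a', ha⟩, h2⟩
  · exact ⟨a', b', Set.mem_iUnion.mpr ⟨a, ha⟩, Set.mem_iUnion.mpr ⟨b, hb⟩, h2.trans hsum⟩
end

section
/- Let X be a real Hilbert space, let A, B : X ⇉ X be monotone set-valued operators with total resolvent selections J_A, J_B, let T be the Douglas–Rachford operator of (A,B), and let w ∈ X. Then: (i) if x ∈ X satisfies x = T x + w, then x − w − J_B x ∈ (B(J_B x) − w) ∩ (−A(J_B x − w)); (ii) conversely, if z, y ∈ X satisfy y ∈ (B z − w) ∩ (−A(z − w)), then x := w + y + z satisfies x = T x + w and J_B x = z. -/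
open Pointwise
open scoped RealInnerProductSpace

lemma res_unique {X : Type*} [NormedAddCommGroup X] [InnerProductSpace ℝ X]
    (A : X → Set X)
    (hA : ∀ x y x' y' : X, x' ∈ A x → y' ∈ A y → 0 ≤ ⟪x - y, x' - y'⟫)
    (JA : X → X) (hJA : ∀ x : X, x - JA x ∈ A (JA x))
    (u p : X) (hp : u - p ∈ A p) : JA u = p := by
  have h := hA (JA u) p (u - JA u) (u - p) (hJA u) hp
  have e : (u - JA u) - (u - p) = -(JA u - p) := by abel
  rw [e, inner_neg_right] at h
  have h2 : (0:ℝ) ≤ ⟪JA u - p, JA u - p⟫ := real_inner_self_nonneg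
  have h3 : ⟪JA u - p, JA u - p⟫ = (0:ℝ) := le_antisymm (by linarith) h2
  exact sub_eq_zero.mp (inner_self_eq_zero.mp h3)

/-- Fixed points of `x ↦ T x + w` for the Douglas–Rachford operator `T`
of monotone `(A,B)`: (i) if `x = T x + w` then `x - w - J_B x ∈ (B (J_B x) - w) ∩ (-A (J_B x - w))`;
(ii) conversely, if `y ∈ (B z - w) ∩ (-A (z - w))` then `x := w + y + z` satisfies
`x = T x + w` and `J_B x = z`. -/
theorem stmt5 {X : Type*} [NormedAddCommGroup X] [InnerProductSpace ℝ X] [CompleteSpace X]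
    (A B : X → Set X)
    (hA : ∀ x y x' y' : X, x' ∈ A x → y' ∈ A y → 0 ≤ ⟪x - y, x' - y'⟫)
    (hB : ∀ x y x' y' : X, x' ∈ B x → y' ∈ B y → 0 ≤ ⟪x - y, x' - y'⟫)
    (JA JB : X → X)
    (hJA : ∀ x : X, x - JA x ∈ A (JA x)) (hJB : ∀ x : X, x - JB x ∈ B (JB x))
    (T : X → X) (hT : ∀ x : X, T x = JA (2 • JB x - x) + x - JB x) (w : X) :
    (∀ x : X, x = T x + w →
      x - w - JB x ∈ ((fun b => b - w) '' B (JB x)) ∩ (-(A (JB x - w)))) ∧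
    (∀ z y : X, y ∈ ((fun b => b - w) '' B z) ∩ (-(A (z - w))) →
      w + y + z = T (w + y + z) + w ∧ JB (w + y + z) = z) := by
  constructor
  · intro x hx
    rw [hT x] at hx
    have hfix : JA (2 • JB x - x) = JB x - w := by
      have h : JA (2 • JB x - x) + x - JB x + w = x := hx.symm
      calc JA (2 • JB x - x) = (JA (2 • JB x - x) + x - JB x + w) - x + JB x - w := by abel
        _ = x - x + JB x - w := by rw [h]
        _ = JB x - w := by abel
    constructor
    · exact ⟨x - JB x, hJB x, by abel⟩
    · have h := hJA (2 • JB x - x)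
      rw [hfix] at h
      have e : 2 • JB x - x - (JB x - w) = -(x - w - JB x) := by
        simp only [two_smul]; abel
      rw [e] at h
      exact h
  · intro z y hy
    obtain ⟨⟨b, hb, hbw⟩, hy2⟩ := hy
    -- hbw : b - w = y
    have hJBx : JB (w + y + z) = z := by
      apply res_unique B hB JB hJB
      have hbw' : b - w = y := hbw
      have : w + y + z - z = b := by rw [← hbw']; abel
      rw [this]; exact hb
    have hneg : -y ∈ A (z - w) := hy2
    have hJAx : JA (2 • JB (w + y + z) - (w + y + z)) = z - w := by
      apply res_unique A hA JA hJA
      rw [hJBx]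
      have : 2 • z - (w + y + z) - (z - w) = -y := by simp only [two_smul]; abel
      rw [this]; exact hneg
    refine ⟨?_, hJBx⟩
    rw [hT, hJAx, hJBx]
    abel
end

section
/- Let X be a real Hilbert space, let A, B : X ⇉ X be monotone set-valued operators with total resolvent selections J_A, J_B, let T be the Douglas–Rachford operator of (A,B), and let w ∈ X. Then {x ∈ X : x = T x + w} = w + ⋃_{z ∈ X} ( z + ((B z − w) ∩ (−A(z − w))) ), i.e., x satisfies x = T x + w if and only if there exist z ∈ X and y ∈ (B z − w) ∩ (−A(z − w)) with x = w + z + y. -/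
open Pointwise
open scoped RealInnerProductSpace

private lemma eq_of_inner_neg {X : Type*} [NormedAddCommGroup X] [InnerProductSpace ℝ X]
    (u v : X) (h : 0 ≤ ⟪u - v, v - u⟫) : u = v := by
  have : ⟪u - v, v - u⟫ = -‖u - v‖ ^ 2 := by
    rw [show v - u = -(u - v) by abel, inner_neg_right, real_inner_self_eq_norm_sq]
  rw [this] at h
  have : ‖u - v‖ ^ 2 ≤ 0 := by linarith
  have h0 : ‖u - v‖ ^ 2 = 0 := le_antisymm this (sq_nonneg _)
  have hn : ‖u - v‖ = 0 := by
    nlinarith [norm_nonneg (u - v)]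
  exact sub_eq_zero.mp (norm_eq_zero.mp hn)

/-- `{x : x = T x + w} = w + ⋃_z (z + ((B z - w) ∩ (-A (z - w))))`,
i.e. `x = T x + w` iff `x = w + z + y` for some `z` and some
`y ∈ (B z - w) ∩ (-A (z - w))`. -/
theorem stmt6 {X : Type*} [NormedAddCommGroup X] [InnerProductSpace ℝ X] [CompleteSpace X]
    (A B : X → Set X)
    (hA : ∀ x y x' y' : X, x' ∈ A x → y' ∈ A y → 0 ≤ ⟪x - y, x' - y'⟫)
    (hB : ∀ x y x' y' : X, x' ∈ B x → y' ∈ B y → 0 ≤ ⟪x - y, x' - y'⟫)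
    (JA JB : X → X)
    (hJA : ∀ x : X, x - JA x ∈ A (JA x)) (hJB : ∀ x : X, x - JB x ∈ B (JB x))
    (T : X → X) (hT : ∀ x : X, T x = JA (2 • JB x - x) + x - JB x) (w : X) :
    {x : X | x = T x + w}
      = {x : X | ∃ z y : X,
          y ∈ ((fun b => b - w) '' B z) ∩ (-(A (z - w))) ∧ x = w + z + y} := by
  ext x
  simp only [Set.mem_setOf_eq]
  constructor
  · intro hx
    have hx' : JA (2 • JB x - x) = JB x - w := by
      have := hT x
      rw [this] at hx
      have : JA (2 • JB x - x) + x - JB x + w - x = 0 := by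
        rw [← hx]; abel
      have h2 : JA (2 • JB x - x) - (JB x - w) = 0 := by
        rw [← this]; abel
      exact sub_eq_zero.mp h2
    refine ⟨JB x, x - w - JB x, ⟨⟨x - JB x, hJB x, by abel⟩, ?_⟩, by abel⟩
    · rw [Set.mem_neg]
      have := hJA (2 • JB x - x)
      rw [hx'] at this
      have he : 2 • JB x - x - (JB x - w) = -(x - w - JB x) := by
        rw [two_smul]; abel
      rwa [he] at this
  · rintro ⟨z, y, ⟨⟨b, hb, hbw⟩, hy2⟩, hx⟩
    simp only at hbw hx
    rw [Set.mem_neg] at hy2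
    -- x - z = w + y = b ∈ B z
    have hxz : x - z ∈ B z := by
      have : x - z = b := by rw [hx, ← hbw]; abel
      rw [this]; exact hb
    have hJBx : JB x = z := by
      apply eq_of_inner_neg
      have := hB (JB x) z (x - JB x) (x - z) (hJB x) hxz
      have he : (x - JB x) - (x - z) = z - JB x := by abel
      rwa [he] at this
    set u := 2 • JB x - x with hu
    have hmem : u - (z - w) ∈ A (z - w) := by
      have : u - (z - w) = -y := by
        rw [hu, hJBx, two_smul, hx]; abel
      rw [this]; exact hy2
    have hJAu : JA u = z - w := by
      apply eq_of_inner_neg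
      have := hA (JA u) (z - w) (u - JA u) (u - (z - w)) (hJA u) hmem
      have he : (u - JA u) - (u - (z - w)) = (z - w) - JA u := by abel
      rwa [he] at this
    rw [hT x, hJAu, hJBx]
    abel
end

section
/- Let X be a real Hilbert space, let A, B : X ⇉ X be set-valued operators with total resolvent selections J_A, J_B, let T be the Douglas–Rachford operator of (A,B), and let w ∈ X. Define J_A' x := J_A(x − w) + w and J_B' x := J_B(x + w). Then J_A' is a total resolvent selection of the inner perturbation x ↦ A(x − w), J_B' is a total resolvent selection of the outer perturbation x ↦ B x − w, and the Douglas–Rachford operator T' of the perturbed pair, T' x = J_A'(2 J_B' x − x) + x − J_B' x, satisfies T' x = T(x + w) for every x ∈ X. -/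
open scoped RealInnerProductSpace

/-- `J_A' x := J_A (x - w) + w` is a total resolvent selection of the
inner perturbation `x ↦ A (x - w)`, `J_B' x := J_B (x + w)` is a total resolvent selection
of the outer perturbation `x ↦ B x - w`, and the Douglas–Rachford operator `T'` of the
perturbed pair satisfies `T' x = T (x + w)`. -/
theorem stmt7 {X : Type*} [NormedAddCommGroup X] [InnerProductSpace ℝ X] [CompleteSpace X]
    (A B : X → Set X) (JA JB : X → X)
    (hJA : ∀ x : X, x - JA x ∈ A (JA x)) (hJB : ∀ x : X, x - JB x ∈ B (JB x))
    (T : X → X) (hT : ∀ x : X, T x = JA (2 • JB x - x) + x - JB x) (w : X)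
    (JA' JB' : X → X)
    (hJA' : ∀ x : X, JA' x = JA (x - w) + w) (hJB' : ∀ x : X, JB' x = JB (x + w)) :
    (∀ x : X, x - JA' x ∈ A (JA' x - w)) ∧
    (∀ x : X, x - JB' x ∈ (fun b => b - w) '' B (JB' x)) ∧
    (∀ x : X, JA' (2 • JB' x - x) + x - JB' x = T (x + w)) := by
  refine ⟨fun x => ?_, fun x => ?_, fun x => ?_⟩
  · have := hJA (x - w)
    rw [hJA']
    have h1 : x - (JA (x - w) + w) = (x - w) - JA (x - w) := by abel
    have h2 : JA (x - w) + w - w = JA (x - w) := by abel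
    rw [h1, h2]; exact this
  · rw [hJB']
    exact ⟨(x + w) - JB (x + w), hJB (x + w), by abel⟩
  · rw [hJB', hJA', hT (x + w)]
    have : 2 • JB (x + w) - x - w = 2 • JB (x + w) - (x + w) := by abel
    rw [this]; abel
end

section
/- Let X be a real Hilbert space, let A, B : X ⇉ X be monotone set-valued operators with total resolvent selections J_A, J_B, let T be the Douglas–Rachford operator of (A,B), and let w ∈ X. Define the set-valued mapping K_w : X ⇉ X by K_w(z) = (−A(z − w)) ∩ (B z − w). Then the map Ψ_w : graph(K_w) → {x ∈ X : x = T x + w} given by Ψ_w(z, k) = z + k + w is a well-defined bijection, with inverse given by x ↦ (J_B x, x − J_B x − w). -/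
open Pointwise
open scoped RealInnerProductSpace

lemma res_uniq {X : Type*} [NormedAddCommGroup X] [InnerProductSpace ℝ X]
    (B : X → Set X)
    (hB : ∀ x y x' y' : X, x' ∈ B x → y' ∈ B y → 0 ≤ ⟪x - y, x' - y'⟫)
    (JB : X → X) (hJB : ∀ x : X, x - JB x ∈ B (JB x))
    {x u : X} (hu : x - u ∈ B u) : u = JB x := by
  have h := hB u (JB x) (x - u) (x - JB x) hu (hJB x)
  have he : (x - u) - (x - JB x) = -(u - JB x) := by abel
  rw [he, inner_neg_right, real_inner_self_eq_norm_sq] at h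
  have hn : ‖u - JB x‖ = 0 := by nlinarith [norm_nonneg (u - JB x)]
  exact sub_eq_zero.mp (norm_eq_zero.mp hn)

/-- With `K_w z = (-A (z - w)) ∩ (B z - w)`, the map
`Ψ_w : gra K_w → {x : x = T x + w}, (z,k) ↦ z + k + w` is a well-defined bijection,
with inverse `x ↦ (J_B x, x - J_B x - w)`. -/
theorem stmt9 {X : Type*} [NormedAddCommGroup X] [InnerProductSpace ℝ X] [CompleteSpace X]
    (A B : X → Set X)
    (hA : ∀ x y x' y' : X, x' ∈ A x → y' ∈ A y → 0 ≤ ⟪x - y, x' - y'⟫)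
    (hB : ∀ x y x' y' : X, x' ∈ B x → y' ∈ B y → 0 ≤ ⟪x - y, x' - y'⟫)
    (JA JB : X → X)
    (hJA : ∀ x : X, x - JA x ∈ A (JA x)) (hJB : ∀ x : X, x - JB x ∈ B (JB x))
    (T : X → X) (hT : ∀ x : X, T x = JA (2 • JB x - x) + x - JB x) (w : X) :
    Set.BijOn (fun p : X × X => p.1 + p.2 + w)
      {p : X × X | p.2 ∈ (-(A (p.1 - w))) ∩ ((fun b => b - w) '' B p.1)}
      {x : X | x = T x + w} ∧
    Set.InvOn (fun x : X => (JB x, x - JB x - w)) (fun p : X × X => p.1 + p.2 + w)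
      {p : X × X | p.2 ∈ (-(A (p.1 - w))) ∩ ((fun b => b - w) '' B p.1)}
      {x : X | x = T x + w} := by
  set S : Set (X × X) := {p : X × X | p.2 ∈ (-(A (p.1 - w))) ∩ ((fun b => b - w) '' B p.1)}
    with hS
  set F : Set X := {x : X | x = T x + w} with hF
  -- key computations for p ∈ S
  have key : ∀ p : X × X, p ∈ S →
      JB (p.1 + p.2 + w) = p.1 ∧ p.1 + p.2 + w = T (p.1 + p.2 + w) + w := by
    rintro ⟨z, k⟩ ⟨hkA, b, hbB, hbk⟩
    simp only at hkA hbB hbk ⊢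
    have hkB : z + k + w - z ∈ B z := by
      have : z + k + w - z = b := by rw [← hbk]; abel
      rw [this]; exact hbB
    have hz : z = JB (z + k + w) := res_uniq B hB JB hJB hkB
    have hmk : -k ∈ A (z - w) := Set.mem_neg.mp hkA
    have hAres : (2 • z - (z + k + w)) - (z - w) ∈ A (z - w) := by
      have : (2 • z - (z + k + w)) - (z - w) = -k := by
        rw [two_smul]; abel
      rw [this]; exact hmk
    have hzw : z - w = JA (2 • z - (z + k + w)) := res_uniq A hA JA hJA hAres
    constructor
    · exact hz.symm
    · rw [hT, ← hz, ← hzw]; abel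
  have hmaps : Set.MapsTo (fun p : X × X => p.1 + p.2 + w) S F := by
    intro p hp
    exact (key p hp).2
  have hleft : Set.LeftInvOn (fun x : X => (JB x, x - JB x - w))
      (fun p : X × X => p.1 + p.2 + w) S := by
    rintro ⟨z, k⟩ hp
    have h1 := (key _ hp).1
    simp only at h1 ⊢
    rw [h1]
    refine Prod.ext rfl ?_
    simp
    abel
  have hright : Set.RightInvOn (fun x : X => (JB x, x - JB x - w))
      (fun p : X × X => p.1 + p.2 + w) F := by
    intro x hx
    simp only
    abel
  have hmaps' : Set.MapsTo (fun x : X => (JB x, x - JB x - w)) F S := by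
    intro x hx
    have hx' : x = T x + w := hx
    set z := JB x with hz
    have hTx : T x = JA (2 • z - x) + x - z := hT x
    have hJAval : JA (2 • z - x) = z - w := by
      have : x = JA (2 • z - x) + x - z + w := by rw [← hTx]; exact hx'
      have h2 : JA (2 • z - x) = z - w := by
        have := this
        -- x = JA(..) + x - z + w ⇒ JA(..) = z - w
        have h3 : JA (2 • z - x) + x - z + w - x = 0 := by rw [← this]; abel
        have : JA (2 • z - x) - (z - w) = 0 := by rw [← h3]; abel
        exact sub_eq_zero.mp this
      exact h2
    constructor
    · refine Set.mem_neg.mpr ?_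
      have := hJA (2 • z - x)
      rw [hJAval] at this
      have he : 2 • z - x - (z - w) = -(x - z - w) := by rw [two_smul]; abel
      rwa [he] at this
    · exact ⟨x - z, hJB x, by abel⟩
  exact ⟨⟨hmaps, hleft.injOn, fun x hx => ⟨_, hmaps' hx, hright hx⟩⟩, hleft, hright⟩
end

section
/- Let X be a real Hilbert space, let A, B : X ⇉ X be monotone set-valued operators with total resolvent selections J_A, J_B, let T be the Douglas–Rachford operator of (A,B), and let w ∈ X. Let Z_w := {x ∈ X : w ∈ A(x − w) + B x} (Minkowski sum) be the solution set of the w-perturbed problem. Then Z_w = J_B '' {y ∈ X : y = T y + w} (the image under J_B of the set of y with y = T y + w), and the following are equivalent: (i) Z_w ≠ ∅; (ii) there exists x ∈ X with x = T(x + w); (iii) w belongs to the range of Id − T, i.e., ∃ y ∈ X with w = y − T y. -/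
open Pointwise
open scoped RealInnerProductSpace

lemma resolvent_fix' {X : Type*} [NormedAddCommGroup X] [InnerProductSpace ℝ X]
    (A : X → Set X)
    (hA : ∀ x y x' y' : X, x' ∈ A x → y' ∈ A y → 0 ≤ ⟪x - y, x' - y'⟫)
    (JA : X → X) (hJA : ∀ x : X, x - JA x ∈ A (JA x)) {u a : X} (ha : a ∈ A u) :
    JA (u + a) = u := by
  set v := JA (u + a) with hv
  have h := hA u v a ((u + a) - v) ha (hJA (u + a))
  have e : a - ((u + a) - v) = -(u - v) := by abel
  rw [e, inner_neg_right] at h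
  have h2 : ⟪u - v, u - v⟫ ≤ 0 := by linarith
  have h3 : u - v = 0 := real_inner_self_nonpos.mp h2
  exact (sub_eq_zero.mp h3).symm

/-- With `Z_w = {x : w ∈ A (x - w) + B x}` the solution set of the
`w`-perturbed problem, `Z_w = J_B '' {y : y = T y + w}`, and the following are equivalent:
(i) `Z_w ≠ ∅`; (ii) `∃ x, x = T (x + w)`; (iii) `w ∈ ran (Id - T)`. -/
theorem stmt10 {X : Type*} [NormedAddCommGroup X] [InnerProductSpace ℝ X] [CompleteSpace X]
    (A B : X → Set X)
    (hA : ∀ x y x' y' : X, x' ∈ A x → y' ∈ A y → 0 ≤ ⟪x - y, x' - y'⟫)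
    (hB : ∀ x y x' y' : X, x' ∈ B x → y' ∈ B y → 0 ≤ ⟪x - y, x' - y'⟫)
    (JA JB : X → X)
    (hJA : ∀ x : X, x - JA x ∈ A (JA x)) (hJB : ∀ x : X, x - JB x ∈ B (JB x))
    (T : X → X) (hT : ∀ x : X, T x = JA (2 • JB x - x) + x - JB x) (w : X) :
    ({x : X | w ∈ A (x - w) + B x} = JB '' {y : X | y = T y + w}) ∧
    (({x : X | w ∈ A (x - w) + B x} ≠ ∅) ↔ (∃ x : X, x = T (x + w))) ∧
    ((∃ x : X, x = T (x + w)) ↔ (∃ y : X, w = y - T y)) := by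
  have hZ : {x : X | w ∈ A (x - w) + B x} = JB '' {y : X | y = T y + w} := by
    ext x
    simp only [Set.mem_setOf_eq, Set.mem_image]
    constructor
    · rintro hx
      rw [Set.mem_add] at hx
      obtain ⟨a, ha, b, hb, hab⟩ := hx
      have hJBx : JB (x + b) = x := resolvent_fix' B hB JB hJB hb
      refine ⟨x + b, ?_, hJBx⟩
      have harg : 2 • JB (x + b) - (x + b) = (x - w) + a := by
        rw [hJBx, two_smul, ← hab]; abel
      have hJAx : JA ((x - w) + a) = x - w := resolvent_fix' A hA JA hJA ha
      rw [hT, harg, hJAx, hJBx]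
      abel
    · rintro ⟨y, hy, rfl⟩
      rw [Set.mem_add]
      set c := 2 • JB y - y with hc
      have h1 : y = JA c + y - JB y + w := by rw [hT y] at hy; exact hy
      have hJAeq : JA c = JB y - w := by
        have h2 : JA c - (JB y - w) = (JA c + y - JB y + w) - y := by abel
        rw [← h1, sub_self] at h2
        exact sub_eq_zero.mp h2
      refine ⟨c - JA c, by rw [← hJAeq]; exact hJA c, y - JB y, hJB y, ?_⟩
      rw [hJAeq, hc, two_smul]; abel
  refine ⟨hZ, ?_, ?_⟩
  · rw [hZ, ← Set.nonempty_iff_ne_empty, Set.image_nonempty]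
    constructor
    · rintro ⟨y, hy⟩
      rw [Set.mem_setOf_eq] at hy
      exact ⟨T y, by rw [show T y + w = y from hy.symm]⟩
    · rintro ⟨x, hx⟩
      refine ⟨x + w, ?_⟩
      rw [Set.mem_setOf_eq, ← hx]
  · constructor
    · rintro ⟨x, hx⟩
      exact ⟨x + w, by rw [← hx]; abel⟩
    · rintro ⟨y, hy⟩
      refine ⟨T y, ?_⟩
      have h : T y + w = y := by rw [hy]; abel
      rw [h]
end

section
/- Let X be a real Hilbert space and let J_A, J_B : X → X be maps such that 2 J_A − Id and 2 J_B − Id are nonexpansive (this holds, in particular, when J_A and J_B are firmly nonexpansive, e.g., resolvents of maximally monotone operators). Define T_{(A,B)} x = J_A(2 J_B x − x) + x − J_B x and T_{(B,A)} x = J_B(2 J_A x − x) + x − J_A x. Then inf_{x ∈ X} ‖x − T_{(A,B)} x‖ = inf_{x ∈ X} ‖x − T_{(B,A)} x‖; consequently the infimal displacement vectors v(A,B) and v(B,A) of these two Douglas–Rachford operators have equal norms. -/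
open scoped RealInnerProductSpace

private lemma dr_key {X : Type*} [NormedAddCommGroup X] [InnerProductSpace ℝ X]
    (JA JB : X → X)
    (hB : ∀ x y : X, ‖(2 • JB x - x) - (2 • JB y - y)‖ ≤ ‖x - y‖) (x : X) :
    ‖(2 • JB x - x) - (JB (2 • JA (2 • JB x - x) - (2 • JB x - x)) + (2 • JB x - x)
        - JA (2 • JB x - x))‖ ≤ ‖x - (JA (2 • JB x - x) + x - JB x)‖ := by
  set y := 2 • JB x - x with hy
  set w := JA y with hw
  set z := 2 • w - y with hz
  have h := hB x z
  have e1 : y - (JB z + y - w) = (1/2 : ℝ) • ((2 • JB x - x) - (2 • JB z - z)) := by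
    rw [hz, hy]
    generalize JB x = a
    generalize JB z = c
    module
  have e2 : x - (JA (2 • JB x - x) + x - JB x) = (1/2 : ℝ) • (x - z) := by
    rw [hz, hy, ← hw]
    generalize JB x = a
    module
  rw [e1, e2, norm_smul, norm_smul]
  have : ‖(1/2 : ℝ)‖ = (1/2 : ℝ) := by norm_num
  rw [this]
  nlinarith [norm_nonneg ((2 • JB x - x) - (2 • JB z - z)), norm_nonneg (x - z)]

private lemma dr_inf_le {X : Type*} [NormedAddCommGroup X] [InnerProductSpace ℝ X]
    (JA JB : X → X)
    (hB : ∀ x y : X, ‖(2 • JB x - x) - (2 • JB y - y)‖ ≤ ‖x - y‖) :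
    (⨅ x : X, ‖x - (JB (2 • JA x - x) + x - JA x)‖)
      ≤ (⨅ x : X, ‖x - (JA (2 • JB x - x) + x - JB x)‖) := by
  apply le_ciInf
  intro x
  have bdd : BddBelow (Set.range fun y : X => ‖y - (JB (2 • JA y - y) + y - JA y)‖) :=
    ⟨0, by rintro _ ⟨y, rfl⟩; exact norm_nonneg _⟩
  exact (ciInf_le bdd (2 • JB x - x)).trans (dr_key JA JB hB x)

private lemma dr_min_norm {X : Type*} [NormedAddCommGroup X] [InnerProductSpace ℝ X]
    (f : X → X) (v : X)
    (h1 : v ∈ closure (Set.range fun x => x - f x))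
    (h2 : ∀ u ∈ closure (Set.range fun x => x - f x), ‖v‖ ≤ ‖u‖) :
    ‖v‖ = ⨅ x : X, ‖x - f x‖ := by
  have bdd : BddBelow (Set.range fun x : X => ‖x - f x‖) :=
    ⟨0, by rintro _ ⟨y, rfl⟩; exact norm_nonneg _⟩
  apply le_antisymm
  · exact le_ciInf fun x => h2 _ (subset_closure ⟨x, rfl⟩)
  · have hsub : closure (Set.range fun x => x - f x) ⊆
        {u : X | (⨅ x : X, ‖x - f x‖) ≤ ‖u‖} := by
      apply closure_minimal
      · rintro _ ⟨x, rfl⟩; exact ciInf_le bdd x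
      · exact isClosed_le continuous_const continuous_norm
    exact hsub h1

/-- If `2 J_A - Id` and `2 J_B - Id` are nonexpansive, then the
Douglas–Rachford operators `T_{(A,B)}` and `T_{(B,A)}` satisfy
`inf ‖x - T_{(A,B)} x‖ = inf ‖x - T_{(B,A)} x‖`; consequently the infimal displacement
vectors `v(A,B)` and `v(B,A)` have equal norms. -/
theorem stmt12 {X : Type*} [NormedAddCommGroup X] [InnerProductSpace ℝ X] [CompleteSpace X]
    (JA JB : X → X)
    (hA : ∀ x y : X, ‖(2 • JA x - x) - (2 • JA y - y)‖ ≤ ‖x - y‖)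
    (hB : ∀ x y : X, ‖(2 • JB x - x) - (2 • JB y - y)‖ ≤ ‖x - y‖) :
    (⨅ x : X, ‖x - (JA (2 • JB x - x) + x - JB x)‖)
      = (⨅ x : X, ‖x - (JB (2 • JA x - x) + x - JA x)‖) ∧
    ∀ v₁ v₂ : X,
      (v₁ ∈ closure (Set.range fun x => x - (JA (2 • JB x - x) + x - JB x)) ∧
        ∀ u ∈ closure (Set.range fun x => x - (JA (2 • JB x - x) + x - JB x)), ‖v₁‖ ≤ ‖u‖) →
      (v₂ ∈ closure (Set.range fun x => x - (JB (2 • JA x - x) + x - JA x)) ∧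
        ∀ u ∈ closure (Set.range fun x => x - (JB (2 • JA x - x) + x - JA x)), ‖v₂‖ ≤ ‖u‖) →
      ‖v₁‖ = ‖v₂‖ := by
  have heq : (⨅ x : X, ‖x - (JA (2 • JB x - x) + x - JB x)‖)
      = (⨅ x : X, ‖x - (JB (2 • JA x - x) + x - JA x)‖) :=
    le_antisymm (dr_inf_le JB JA hA) (dr_inf_le JA JB hB)
  refine ⟨heq, fun v₁ v₂ h₁ h₂ => ?_⟩
  rw [dr_min_norm _ v₁ h₁.1 h₁.2, dr_min_norm _ v₂ h₂.1 h₂.2, heq]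
end

section
/- Let X be a real Hilbert space, let A, B : X ⇉ X be monotone set-valued operators with total resolvent selections J_A, J_B, and let T be the Douglas–Rachford operator of (A,B). Then {z − J_A z : z ∈ X, 0 ∈ B z} ⊆ {y − T y : y ∈ X} ⊆ {b − a : b, a ∈ X, B b ≠ ∅, A a ≠ ∅}; that is, (Id − J_A)(B⁻¹ 0) is contained in the range of Id − T, which in turn is contained in dom B − dom A. -/
open scoped RealInnerProductSpace

def MonotoneOp {X : Type*} [NormedAddCommGroup X] [InnerProductSpace ℝ X] (A : X → Set X) :
    Prop :=
  ∀ x y x' y' : X, x' ∈ A x → y' ∈ A y → 0 ≤ ⟪x - y, x' - y'⟫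

theorem MonotoneOp.resolvent_eq_self_of_zero_mem {X : Type*} [NormedAddCommGroup X]
    [InnerProductSpace ℝ X] {B : X → Set X} (hB : MonotoneOp B) {J : X → X}
    (hJ : ∀ x : X, x - J x ∈ B (J x)) {z : X} (hz : 0 ∈ B z) : J z = z := by
  have hmono : 0 ≤ ⟪z - J z, 0 - (z - J z)⟫ := hB z (J z) 0 (z - J z) hz (hJ z)
  rw [zero_sub, inner_neg_right, neg_nonneg] at hmono
  exact (sub_eq_zero.mp (real_inner_self_nonpos.mp hmono)).symm

theorem stmt13_general {X : Type*} [NormedAddCommGroup X] [InnerProductSpace ℝ X]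
    (A B : X → Set X)
    (hB : ∀ x y x' y' : X, x' ∈ B x → y' ∈ B y → 0 ≤ ⟪x - y, x' - y'⟫)
    (JA JB : X → X)
    (hJA : ∀ x : X, x - JA x ∈ A (JA x)) (hJB : ∀ x : X, x - JB x ∈ B (JB x))
    (T : X → X) (hT : ∀ x : X, T x = JA (2 • JB x - x) + x - JB x) :
    ({y : X | ∃ z : X, 0 ∈ B z ∧ y = z - JA z} ⊆ {y : X | ∃ x : X, y = x - T x}) ∧
    ({y : X | ∃ x : X, y = x - T x}
      ⊆ {d : X | ∃ b a : X, B b ≠ ∅ ∧ A a ≠ ∅ ∧ d = b - a}) := by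
  have hsub : ∀ x, x - T x = JB x - JA (2 • JB x - x) := fun x => by rw [hT]; abel
  constructor
  · rintro y ⟨z, hz, rfl⟩
    have hfix : JB z = z := MonotoneOp.resolvent_eq_self_of_zero_mem hB hJB hz
    refine ⟨z, ?_⟩
    rw [hsub, hfix, two_nsmul, add_sub_cancel_right]
  · rintro y ⟨x, rfl⟩
    exact ⟨JB x, JA (2 • JB x - x), Set.nonempty_iff_ne_empty.mp ⟨_, hJB x⟩,
      Set.nonempty_iff_ne_empty.mp ⟨_, hJA _⟩, hsub x⟩

/-- `(Id - J_A)(B⁻¹ 0) ⊆ ran (Id - T) ⊆ dom B - dom A` for the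
Douglas–Rachford operator `T` of monotone `(A,B)`. -/
theorem stmt13 {X : Type*} [NormedAddCommGroup X] [InnerProductSpace ℝ X] [CompleteSpace X]
    (A B : X → Set X)
    (hA : ∀ x y x' y' : X, x' ∈ A x → y' ∈ A y → 0 ≤ ⟪x - y, x' - y'⟫)
    (hB : ∀ x y x' y' : X, x' ∈ B x → y' ∈ B y → 0 ≤ ⟪x - y, x' - y'⟫)
    (JA JB : X → X)
    (hJA : ∀ x : X, x - JA x ∈ A (JA x)) (hJB : ∀ x : X, x - JB x ∈ B (JB x))
    (T : X → X) (hT : ∀ x : X, T x = JA (2 • JB x - x) + x - JB x) :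
    ({y : X | ∃ z : X, 0 ∈ B z ∧ y = z - JA z} ⊆ {y : X | ∃ x : X, y = x - T x}) ∧
    ({y : X | ∃ x : X, y = x - T x}
      ⊆ {d : X | ∃ b a : X, B b ≠ ∅ ∧ A a ≠ ∅ ∧ d = b - a}) :=
  stmt13_general A B hB JA JB hJA hJB T hT
end

section
/- Let X be a real Hilbert space, let U and V be nonempty closed convex subsets of X with nearest-point projections P_U and P_V, and let T x = P_U(2 P_V x − x) + x − P_V x be the Douglas–Rachford operator of the pair of normal cone operators (N_U, N_V). Let g be the minimal-norm element of the closure of V − U = {v − u : v ∈ V, u ∈ U}. Then g lies in the closure of {x − T x : x ∈ X} and ‖g‖ ≤ ‖x − T x‖ for every x ∈ X; that is, g is precisely the infimal displacement vector of T, i.e., the minimal-norm element of the closure of the range of Id − T. -/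
open Pointwise
open scoped RealInnerProductSpace

/-- For nonempty closed convex `U, V` with projections `P_U, P_V` and
Douglas–Rachford operator `T x = P_U (2 P_V x - x) + x - P_V x` of `(N_U, N_V)`, the
minimal-norm element `g` of `closure (V - U)` lies in `closure (ran (Id - T))` and
satisfies `‖g‖ ≤ ‖x - T x‖` for all `x`; i.e. `g` is the infimal displacement vector. -/
theorem stmt14 {X : Type*} [NormedAddCommGroup X] [InnerProductSpace ℝ X] [CompleteSpace X]
    (U V : Set X) (hU : U.Nonempty) (hUc : IsClosed U) (hUconv : Convex ℝ U)
    (hV : V.Nonempty) (hVc : IsClosed V) (hVconv : Convex ℝ V)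
    (PU PV : X → X)
    (hPU : ∀ x : X, PU x ∈ U ∧ ∀ c ∈ U, ‖x - PU x‖ ≤ ‖x - c‖)
    (hPV : ∀ x : X, PV x ∈ V ∧ ∀ c ∈ V, ‖x - PV x‖ ≤ ‖x - c‖)
    (T : X → X) (hT : ∀ x : X, T x = PU (2 • PV x - x) + x - PV x)
    (g : X) (hg : g ∈ closure (V - U)) (hgmin : ∀ d ∈ closure (V - U), ‖g‖ ≤ ‖d‖) :
    g ∈ closure {y : X | ∃ x : X, y = x - T x} ∧ ∀ x : X, ‖g‖ ≤ ‖x - T x‖ := by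
  -- every displacement lies in V - U
  have hdisp : ∀ x : X, x - T x ∈ V - U := by
    intro x
    have h1 : x - T x = PV x - PU (2 • PV x - x) := by rw [hT x]; abel
    rw [h1]
    exact Set.sub_mem_sub (hPV x).1 (hPU (2 • PV x - x)).1
  -- variational inequality for the minimal norm element g
  have hVI : ∀ d ∈ V - U, 0 ≤ ⟪g, d - g⟫ := by
    intro d hd
    have hdK : d ∈ closure (V - U) := subset_closure hd
    have hKconv : Convex ℝ (closure (V - U)) := (hVconv.sub hUconv).closure
    have key : ∀ t : ℝ, 0 < t → t ≤ 1 → 0 ≤ 2 * ⟪g, d - g⟫ + t * ‖d - g‖ ^ 2 := by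
      intro t ht ht1
      have hz : (1 - t) • g + t • d ∈ closure (V - U) :=
        hKconv hg hdK (by linarith) ht.le (by ring)
      have hle : ‖g‖ ≤ ‖(1 - t) • g + t • d‖ := hgmin _ hz
      have heq : (1 - t) • g + t • d = g + t • (d - g) := by
        rw [smul_sub]; module
      rw [heq] at hle
      have hsq : ‖g + t • (d - g)‖ ^ 2 =
          ‖g‖ ^ 2 + 2 * (t * ⟪g, d - g⟫) + t ^ 2 * ‖d - g‖ ^ 2 := by
        rw [norm_add_sq_real, real_inner_smul_right, norm_smul]
        simp [mul_pow, abs_of_pos ht]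
      have h2 : ‖g‖ ^ 2 ≤ ‖g + t • (d - g)‖ ^ 2 := by
        have := norm_nonneg g
        nlinarith [norm_nonneg (g + t • (d - g))]
      rw [hsq] at h2
      nlinarith
    by_contra hneg
    push_neg at hneg
    set c := ⟪g, d - g⟫ with hc
    set N := ‖d - g‖ ^ 2 with hN
    have hNpos : 0 ≤ N := by positivity
    have ht0 : 0 < min 1 (-c / (N + 1)) := by
      apply lt_min one_pos
      apply div_pos (by linarith) (by linarith)
    have := key _ ht0 (min_le_left _ _)
    have hmin2 : min 1 (-c / (N + 1)) ≤ -c / (N + 1) := min_le_right _ _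
    have hfrac : (-c / (N + 1)) * N ≤ -c := by
      rw [div_mul_eq_mul_div, div_le_iff₀ (by linarith)]
      nlinarith
    nlinarith [mul_le_mul_of_nonneg_right hmin2 hNpos]
  constructor
  · -- g is in the closure of the displacement set
    rw [Metric.mem_closure_iff]
    intro ε hε
    -- choose δ
    set δ : ℝ := min 1 (ε ^ 2 / (2 * ‖g‖ + 2)) with hδdef
    have hgn : (0:ℝ) ≤ ‖g‖ := norm_nonneg g
    have hδpos : 0 < δ := lt_min one_pos (by positivity)
    have hδ1 : δ ≤ 1 := min_le_left _ _
    have hδ2 : δ ≤ ε ^ 2 / (2 * ‖g‖ + 2) := min_le_right _ _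
    have hδsq : 2 * δ * ‖g‖ + δ ^ 2 < ε ^ 2 := by
      have h1 : δ * (2 * ‖g‖ + δ) < δ * (2 * ‖g‖ + 2) := by
        apply mul_lt_mul_of_pos_left _ hδpos; linarith
      have h2 : δ * (2 * ‖g‖ + 2) ≤ ε ^ 2 := by
        rw [← le_div_iff₀ (by linarith)] at *
        linarith [hδ2]
      nlinarith
    -- pick p = v - u in V - U close to g
    obtain ⟨p, hpmem, hpd⟩ := Metric.mem_closure_iff.mp hg δ hδpos
    obtain ⟨v, hv, u, hu, hvu⟩ := Set.mem_sub.mp hpmem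
    -- P_V v = v
    have hPVv : PV v = v := by
      have h0 : ‖v - PV v‖ ≤ ‖v - v‖ := (hPV v).2 v hv
      simp only [sub_self, norm_zero] at h0
      have : v - PV v = 0 := norm_le_zero_iff.mp h0
      exact (sub_eq_zero.mp this).symm
    -- compute T v
    have hTv : v - T v = v - PU v := by
      rw [hT v, hPVv]
      have h2v : 2 • v - v = v := by rw [two_smul]; abel
      rw [h2v]; abel
    set y := v - T v with hy
    refine ⟨y, ⟨v, rfl⟩, ?_⟩
    -- norm bound on y
    have hyU : ‖y‖ ≤ ‖v - u‖ := by
      rw [hTv]; exact (hPU v).2 u hu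
    have hvug : ‖v - u‖ ≤ ‖g‖ + δ := by
      have : ‖v - u - g‖ < δ := by
        rw [hvu]
        rw [dist_eq_norm] at hpd
        calc ‖p - g‖ = ‖g - p‖ := by rw [norm_sub_rev]
        _ < δ := hpd
      calc ‖v - u‖ = ‖(v - u - g) + g‖ := by abel_nf
      _ ≤ ‖v - u - g‖ + ‖g‖ := norm_add_le _ _
      _ ≤ ‖g‖ + δ := by linarith
    have hyn : ‖y‖ ≤ ‖g‖ + δ := le_trans hyU hvug
    -- y ∈ V - U so VI applies
    have hyVU : y ∈ V - U := hdisp v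
    have hvi := hVI y hyVU
    -- estimate ‖y - g‖
    have hsq : ‖y - g‖ ^ 2 = ‖y‖ ^ 2 - ‖g‖ ^ 2 - 2 * ⟪g, y - g⟫ := by
      have h1 : ⟪g, y - g⟫ = ⟪g, y⟫ - ‖g‖ ^ 2 := by
        rw [inner_sub_right, real_inner_self_eq_norm_sq]
      have h2 : ‖y - g‖ ^ 2 = ‖y‖ ^ 2 - 2 * ⟪y, g⟫ + ‖g‖ ^ 2 := by
        rw [norm_sub_sq_real]
      rw [h2, h1, real_inner_comm y g]; ring
    have hfin : ‖y - g‖ ^ 2 < ε ^ 2 := by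
      have hyg2 : ‖y‖ ^ 2 ≤ (‖g‖ + δ) ^ 2 := by
        have := norm_nonneg y
        nlinarith
      rw [hsq]
      nlinarith
    have : ‖y - g‖ < ε := lt_of_pow_lt_pow_left₀ 2 hε.le hfin
    rw [dist_eq_norm, norm_sub_rev]
    exact this
  · intro x
    exact hgmin _ (subset_closure (hdisp x))
end

section
/- Let X be a real Hilbert space, let U and V be nonempty closed convex subsets of X with nearest-point projections P_U and P_V, and let g be the minimal-norm element of the closure of V − U = {v − u : v ∈ V, u ∈ U}. Then {x ∈ X : g ∈ N_U(x − g) + N_V(x)} = V ∩ (g + U) = {x ∈ X : P_V(P_U x) = x}; that is, the set of normal solutions of the pair (N_U, N_V) equals V ∩ (g + U), which equals the fixed point set of P_V ∘ P_U. -/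
open Pointwise
open scoped RealInnerProductSpace

/-- The normal cone operator of a set `C`: `x ∈ C ↦ {n : ⟪c - x, n⟫ ≤ 0 ∀ c ∈ C}`,
and `x ∉ C ↦ ∅`. -/
def normalConeOp {X : Type*} [NormedAddCommGroup X] [InnerProductSpace ℝ X]
    (C : Set X) : X → Set X :=
  fun x => {n : X | x ∈ C ∧ ∀ c ∈ C, ⟪c - x, n⟫ ≤ 0}

/-- From minimality over a convex set we get the variational inequality. -/
lemma min_to_vi {X : Type*} [NormedAddCommGroup X] [InnerProductSpace ℝ X]
    {C : Set X} (hC : Convex ℝ C) {x y : X} (hy : y ∈ C)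
    (hmin : ∀ c ∈ C, ‖x - y‖ ≤ ‖x - c‖) : ∀ c ∈ C, ⟪x - y, c - y⟫ ≤ 0 := by
  haveI : Nonempty C := ⟨⟨y, hy⟩⟩
  rw [← norm_eq_iInf_iff_real_inner_le_zero hC hy]
  have hbdd : BddBelow (Set.range fun w : C => ‖x - (w : X)‖) :=
    ⟨0, fun _ ⟨_, h⟩ => h ▸ norm_nonneg _⟩
  exact le_antisymm (le_ciInf fun w => hmin w w.2) (ciInf_le hbdd ⟨y, hy⟩)

/-- Uniqueness: a point satisfying the variational inequality is the projection. -/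
lemma proj_eq {X : Type*} [NormedAddCommGroup X] [InnerProductSpace ℝ X]
    {C : Set X} {P : X → X} {x y : X}
    (hP : P x ∈ C ∧ ∀ c ∈ C, ‖x - P x‖ ≤ ‖x - c‖)
    (hy : y ∈ C) (hvi : ∀ c ∈ C, ⟪x - y, c - y⟫ ≤ 0) : P x = y := by
  have h1 : ‖x - P x‖ ≤ ‖x - y‖ := hP.2 y hy
  have h2 : ⟪x - y, P x - y⟫ ≤ 0 := hvi _ hP.1
  have hexp : ‖(x - y) - (P x - y)‖ ^ 2
      = ‖x - y‖ ^ 2 - 2 * ⟪x - y, P x - y⟫ + ‖P x - y‖ ^ 2 := norm_sub_sq_real _ _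
  have hc : (x - y) - (P x - y) = x - P x := by abel
  rw [hc] at hexp
  have hsq : ‖x - P x‖ ^ 2 ≤ ‖x - y‖ ^ 2 := by
    nlinarith [norm_nonneg (x - P x), norm_nonneg (x - y)]
  have : ‖P x - y‖ ^ 2 ≤ 0 := by nlinarith
  have : ‖P x - y‖ = 0 := by nlinarith [norm_nonneg (P x - y), sq_nonneg ‖P x - y‖]
  exact sub_eq_zero.mp (norm_eq_zero.mp this)

/-- For nonempty closed convex `U, V` and `g` the minimal-norm element
of `closure (V - U)`, the set of normal solutions `{x : g ∈ N_U (x - g) + N_V x}` equals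
`V ∩ (g + U)`, which equals the fixed point set of `P_V ∘ P_U`. -/
theorem stmt15 {X : Type*} [NormedAddCommGroup X] [InnerProductSpace ℝ X] [CompleteSpace X]
    (U V : Set X) (hU : U.Nonempty) (hUc : IsClosed U) (hUconv : Convex ℝ U)
    (hV : V.Nonempty) (hVc : IsClosed V) (hVconv : Convex ℝ V)
    (PU PV : X → X)
    (hPU : ∀ x : X, PU x ∈ U ∧ ∀ c ∈ U, ‖x - PU x‖ ≤ ‖x - c‖)
    (hPV : ∀ x : X, PV x ∈ V ∧ ∀ c ∈ V, ‖x - PV x‖ ≤ ‖x - c‖)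
    (g : X) (hg : g ∈ closure (V - U)) (hgmin : ∀ d ∈ closure (V - U), ‖g‖ ≤ ‖d‖) :
    ({x : X | g ∈ normalConeOp U (x - g) + normalConeOp V x}
        = V ∩ ((fun u => g + u) '' U)) ∧
    (V ∩ ((fun u => g + u) '' U) = {x : X | PV (PU x) = x}) := by
  -- variational inequality for g as projection of 0 onto closure (V - U)
  have hKconv : Convex ℝ (closure (V - U)) := (hVconv.sub hUconv).closure
  have hgvi : ∀ d ∈ closure (V - U), 0 ≤ ⟪g, d - g⟫ := by
    have h := min_to_vi hKconv hg (x := 0) (fun c hc => by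
      simpa [norm_neg] using hgmin c hc)
    intro d hd
    have := h d hd
    rw [zero_sub, inner_neg_left] at this
    linarith
  have hgvi' : ∀ v ∈ V, ∀ u ∈ U, 0 ≤ ⟪g, v - u - g⟫ := fun v hv u hu =>
    hgvi _ (subset_closure ⟨v, hv, u, hu, rfl⟩)
  constructor
  · ext x
    simp only [Set.mem_setOf_eq, Set.mem_add, Set.mem_inter_iff, Set.mem_image,
      normalConeOp]
    constructor
    · rintro ⟨n1, ⟨hxgU, _⟩, n2, ⟨hxV, _⟩, _⟩
      exact ⟨hxV, x - g, hxgU, by abel⟩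
    · rintro ⟨hxV, u, hu, hux⟩
      have hxg : x - g ∈ U := by
        have : x - g = u := by rw [← hux]; abel
        rwa [this]
      refine ⟨g, ⟨hxg, fun c hc => ?_⟩, 0, ⟨hxV, fun c _ => by simp⟩, by abel⟩
      have h := hgvi' x hxV c hc
      have he : c - (x - g) = -(x - c - g) := by abel
      rw [real_inner_comm, he, inner_neg_right]
      linarith
  · ext x
    simp only [Set.mem_inter_iff, Set.mem_image, Set.mem_setOf_eq]
    constructor
    · rintro ⟨hxV, u, hu, hux⟩
      have hxg : x - g = u := by rw [← hux]; abel
      have hPUx : PU x = x - g := by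
        apply proj_eq (hPU x) (hxg ▸ hu)
        intro c hc
        have h := hgvi' x hxV c hc
        have h1 : x - (x - g) = g := by abel
        have h2 : c - (x - g) = -(x - c - g) := by abel
        rw [h1, h2, inner_neg_right]
        linarith
      rw [hPUx]
      apply proj_eq (hPV (x - g)) hxV
      intro v hv
      have h := hgvi' v hv (x - g) (hxg ▸ hu)
      have h1 : x - g - x = -g := by abel
      have h2 : v - (x - g) - g = v - x := by abel
      rw [h1, inner_neg_left]
      rw [h2] at h
      linarith
    · intro hx
      set u := PU x with hu_def
      have hu : u ∈ U := (hPU x).1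
      have hxV : x ∈ V := hx ▸ (hPV u).1
      have hviU : ∀ c ∈ U, ⟪x - u, c - u⟫ ≤ 0 :=
        min_to_vi hUconv (hPU x).1 (hPU x).2
      have hviV : ∀ v ∈ V, ⟪u - x, v - x⟫ ≤ 0 := by
        intro v hv
        have := min_to_vi hVconv (hPV u).1 (hPV u).2 v hv
        rwa [hx] at this
      set d := x - u with hd_def
      -- key inequality: ‖d‖² ≤ ⟪d, v - u'⟫ for all v ∈ V, u' ∈ U
      have hkey : ∀ v ∈ V, ∀ u' ∈ U, ‖d‖ ^ 2 ≤ ⟪d, v - u'⟫ := by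
        intro v hv u' hu'
        have e : v - u' = (v - x) + (x - u) + (u - u') := by abel
        rw [e, inner_add_right, inner_add_right]
        have t1 : 0 ≤ ⟪d, v - x⟫ := by
          have h := hviV v hv
          have : d = -(u - x) := by rw [hd_def]; abel
          rw [this, inner_neg_left]
          linarith
        have t2 : ⟪d, x - u⟫ = ‖d‖ ^ 2 := by
          rw [← hd_def, real_inner_self_eq_norm_sq]
        have t3 : 0 ≤ ⟪d, u - u'⟫ := by
          have h := hviU u' hu'
          have : u - u' = -(u' - u) := by abel
          rw [this, inner_neg_right, ← hd_def] at *
          linarith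
        linarith
      have hnorm : ∀ v ∈ V, ∀ u' ∈ U, ‖d‖ ≤ ‖v - u'‖ := by
        intro v hv u' hu'
        have h := hkey v hv u' hu'
        have hcs : ⟪d, v - u'⟫ ≤ ‖d‖ * ‖v - u'‖ := real_inner_le_norm _ _
        rcases eq_or_lt_of_le (norm_nonneg d) with h0 | h0
        · rw [← h0]; exact norm_nonneg _
        · nlinarith
      have hdg : ‖d‖ ≤ ‖g‖ := by
        have hsub : closure (V - U) ⊆ {z : X | ‖d‖ ≤ ‖z‖} := by
          apply closure_minimal _ (isClosed_le continuous_const continuous_norm)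
          rintro z ⟨v, hv, u', hu', rfl⟩
          exact hnorm v hv u' hu'
        exact hsub hg
      have hdK : d ∈ closure (V - U) := subset_closure ⟨x, hxV, u, hu, rfl⟩
      have hgd : ‖g‖ ≤ ‖d‖ := hgmin d hdK
      have hvi_d : 0 ≤ ⟪g, d - g⟫ := hgvi d hdK
      have hdeq : d = g := by
        have hexp : ‖d - g‖ ^ 2 = ‖d‖ ^ 2 - 2 * ⟪d, g⟫ + ‖g‖ ^ 2 := norm_sub_sq_real _ _
        have hig : ‖g‖ ^ 2 ≤ ⟪d, g⟫ := by
          rw [inner_sub_right, real_inner_self_eq_norm_sq, real_inner_comm] at hvi_d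
          linarith
        have hdd : ‖d‖ ^ 2 ≤ ‖g‖ ^ 2 := pow_le_pow_left₀ (norm_nonneg d) hdg 2
        have : ‖d - g‖ ^ 2 ≤ 0 := by nlinarith
        have : ‖d - g‖ = 0 := by nlinarith [norm_nonneg (d - g)]
        exact sub_eq_zero.mp (norm_eq_zero.mp this)
      refine ⟨hxV, u, hu, ?_⟩
      have : x - u = g := hdeq
      rw [← this]; abel
end

section
/- Work in the Euclidean plane ℝ² with the standard inner product, and let β ≥ 0. Let U = ℝ × {0} and V = {(x, y) ∈ ℝ² : β + exp(x) ≤ y}. Then: (i) V − U = {(s, t) ∈ ℝ² : t > β}, so the closure of V − U is ℝ × [β, ∞); (ii) the minimal-norm element of the closure of V − U (i.e., the infimal displacement vector g of the Douglas–Rachford operator of (N_U, N_V)) is g = (0, β); and (iii) V ∩ (g + U) = ∅, so the normal problem associated with (N_U, N_V) has no solution (equivalently, P_V ∘ P_U has no fixed point). -/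
/-!
Subtracting the horizontal line `U` forgets the first coordinate, so `V - U` is the set of points
whose height is a height of `V`; since `exp` takes every positive value, these heights fill
`(β, ∞)`. Every point of `g + U` has height exactly `β`, which no point of `V` reaches.
-/

open Pointwise

/-- The point of `ℝ²` with coordinates `a` and `b`. -/
def planePt (a b : ℝ) : EuclideanSpace ℝ (Fin 2) := WithLp.toLp 2 ![a, b]

@[simp]
lemma planePt_apply_zero (a b : ℝ) : planePt a b 0 = a := rfl

@[simp]
lemma planePt_apply_one (a b : ℝ) : planePt a b 1 = b := rfl

lemma norm_planePt_zero {b : ℝ} (hb : 0 ≤ b) : ‖planePt 0 b‖ = b := by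
  simp [EuclideanSpace.norm_eq, Fin.sum_univ_two, Real.sqrt_sq hb]

lemma sub_setOf_apply_eq_zero {ι : Type*} (V : Set (EuclideanSpace ℝ ι)) (i : ι) :
    V - {u | u i = 0} = {p | ∃ v ∈ V, v i = p i} := by
  ext p
  constructor
  · rintro ⟨v, hv, u, hu, rfl⟩
    exact ⟨v, hv, by simp_all⟩
  · rintro ⟨v, hv, hvp⟩
    exact ⟨v, hv, v - p, by simp [hvp], sub_sub_cancel v p⟩

lemma exists_exp_add_le_apply_one_iff (β t : ℝ) :
    (∃ v : EuclideanSpace ℝ (Fin 2), β + Real.exp (v 0) ≤ v 1 ∧ v 1 = t) ↔ β < t := by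
  constructor
  · rintro ⟨v, hv, rfl⟩
    linarith [Real.exp_pos (v 0)]
  · intro ht
    refine ⟨planePt (Real.log (t - β)) t, ?_, rfl⟩
    simp [Real.exp_log (sub_pos.mpr ht)]

/-- In `ℝ²`, with `U = ℝ × {0}` and `V = {(x,y) : β + exp x ≤ y}`
(`β ≥ 0`): (i) `V - U = ℝ × (β,∞)`, so `closure (V - U) = ℝ × [β,∞)`;
(ii) the minimal-norm element of `closure (V - U)` (the infimal displacement vector of
the Douglas–Rachford operator of `(N_U, N_V)`) is `g = (0, β)`;
(iii) `V ∩ (g + U) = ∅`, so the normal problem has no solution. -/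
theorem stmt16 (β : ℝ) (hβ : 0 ≤ β)
    (U V : Set (EuclideanSpace ℝ (Fin 2)))
    (hU : U = {p : EuclideanSpace ℝ (Fin 2) | p 1 = 0})
    (hV : V = {p : EuclideanSpace ℝ (Fin 2) | β + Real.exp (p 0) ≤ p 1}) :
    (V - U = {p : EuclideanSpace ℝ (Fin 2) | β < p 1}) ∧
    (closure (V - U) = {p : EuclideanSpace ℝ (Fin 2) | β ≤ p 1}) ∧
    (planePt 0 β ∈ closure (V - U) ∧
      ∀ d ∈ closure (V - U), ‖planePt 0 β‖ ≤ ‖d‖) ∧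
    (V ∩ ((fun u => planePt 0 β + u) '' U) = ∅) := by
  have hdiff : V - U = {p : EuclideanSpace ℝ (Fin 2) | β < p 1} := by
    rw [hU, sub_setOf_apply_eq_zero, hV]
    ext p
    exact exists_exp_add_le_apply_one_iff β (p 1)
  have hclosure : closure (V - U) = {p : EuclideanSpace ℝ (Fin 2) | β ≤ p 1} := by
    rw [hdiff, closure_open_halfSpace]
  refine ⟨hdiff, hclosure, ⟨by simp [hclosure], fun d hd => ?_⟩, ?_⟩
  · rw [hclosure] at hd
    calc ‖planePt 0 β‖ = β := norm_planePt_zero hβ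
      _ ≤ ‖d 1‖ := hd.trans (le_abs_self _)
      _ ≤ ‖d‖ := PiLp.norm_apply_le d 1
  · refine Set.eq_empty_of_forall_notMem ?_
    rintro _ ⟨hp, u, hu, rfl⟩
    rw [hV, Set.mem_ofPred_eq] at hp
    rw [hU, Set.mem_ofPred_eq] at hu
    have hp1 : (planePt 0 β + u) 1 = β := by simp [hu]
    linarith [Real.exp_pos ((planePt 0 β + u) 0)]
end

section
/- Work in the Euclidean plane ℝ² with the standard inner product. Let L : ℝ² → ℝ² be the rotator by π/2, L(x, y) = (−y, x), let a*, b* ∈ ℝ², and define single-valued operators A x = L x + a* and B x = −L x − b*. Then: (i) {w ∈ ℝ² : ∃ x, w = A(x − w) + B x} = { ½((a* − b*) − L(a* − b*)) }, so the infimal displacement vector of the Douglas–Rachford operator of (A,B) is v(A,B) = ½(Id − L)(a* − b*); (ii) {w ∈ ℝ² : ∃ x, w = B(x − w) + A x} = { ½((a* − b*) + L(a* − b*)) }, so v(B,A) = ½(Id + L)(a* − b*); and (iii) ⟨v(A,B), v(B,A)⟩ = 0, and both vectors are nonzero whenever a* ≠ b*. -/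
/-!
For `A = L + a` and `B = -L - b` the terms `L x` cancel in `A (x - w) + B x`, so the
`w`-perturbed problem for `(A, B)` reduces to `w + L w = a - b`, and for `(B, A)` to
`w - L w = a - b`. As `L² = -Id`, the operator `Id + L` is invertible with inverse
`½ (Id - L)`. As `L` is moreover skew-adjoint, `‖L d‖ = ‖d‖` and `⟪d, L d⟫ = 0`, which
makes `(Id - L) d` and `(Id + L) d` orthogonal.
-/

open scoped RealInnerProductSpace

/-- The range of `Id - T` for the Douglas–Rachford operator `T` of `(A, B)`. -/
def perturbedSolvableSet {E : Type*} [AddCommGroup E] (A B : E → E) : Set E :=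
  {w | ∃ x, w = A (x - w) + B x}

section Involutive

variable {E : Type*} [AddCommGroup E] [Module ℝ E] (L : E →ₗ[ℝ] E)

theorem add_apply_eq_iff_of_sq_eq_neg (hL : ∀ x, L (L x) = -x) {w d : E} :
    w + L w = d ↔ w = (2 : ℝ)⁻¹ • (d - L d) := by
  constructor
  · rintro rfl
    rw [map_add, hL]
    module
  · rintro rfl
    rw [map_smul, map_sub, hL]
    module

theorem sub_apply_ne_zero_of_sq_eq_neg (hL : ∀ x, L (L x) = -x) {d : E} (hd : d ≠ 0) :
    d - L d ≠ 0 := by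
  intro h
  have hLd : L d = d := (sub_eq_zero.mp h).symm
  have : L (L d) = d := by rw [hLd, hLd]
  rw [hL, neg_eq_iff_add_eq_zero, ← two_smul ℝ d, smul_eq_zero] at this
  exact hd (this.resolve_left two_ne_zero)

theorem perturbedSolvableSet_eq_of_sq_eq_neg (hL : ∀ x, L (L x) = -x) {a b : E} {A B : E → E}
    (hA : ∀ x, A x = L x + a) (hB : ∀ x, B x = -L x - b) :
    perturbedSolvableSet A B = {(2 : ℝ)⁻¹ • ((a - b) - L (a - b))} := by
  ext w
  have hreduce : ∀ x, A (x - w) + B x = (a - b) - L w := fun x => by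
    rw [hA, hB, map_sub]; abel
  simp only [perturbedSolvableSet, Set.mem_ofPred_eq, Set.mem_singleton_iff, hreduce,
    exists_const, eq_sub_iff_add_eq, add_apply_eq_iff_of_sq_eq_neg L hL]

theorem perturbedSolvableSet_swap_eq_of_sq_eq_neg (hL : ∀ x, L (L x) = -x) {a b : E}
    {A B : E → E} (hA : ∀ x, A x = L x + a) (hB : ∀ x, B x = -L x - b) :
    perturbedSolvableSet B A = {(2 : ℝ)⁻¹ • ((a - b) + L (a - b))} := by
  have h := perturbedSolvableSet_eq_of_sq_eq_neg (-L) (by simpa using hL)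
    (a := -b) (b := -a) (A := B) (B := A)
    (fun x => by rw [hB, LinearMap.neg_apply, sub_eq_add_neg])
    (fun x => by rw [hA, LinearMap.neg_apply, neg_neg, sub_neg_eq_add])
  rwa [neg_sub_neg, LinearMap.neg_apply, sub_neg_eq_add] at h

theorem add_apply_ne_zero_of_sq_eq_neg (hL : ∀ x, L (L x) = -x) {d : E} (hd : d ≠ 0) :
    d + L d ≠ 0 := by
  simpa [sub_eq_add_neg] using sub_apply_ne_zero_of_sq_eq_neg (-L) (by simpa using hL) hd

end Involutive

theorem inner_sub_apply_add_apply_of_skew {E : Type*} [NormedAddCommGroup E]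
    [InnerProductSpace ℝ E] (L : E →ₗ[ℝ] E) (hL : ∀ x, L (L x) = -x)
    (hskew : ∀ x y, ⟪L x, y⟫ = -⟪x, L y⟫) (d : E) :
    ⟪d - L d, d + L d⟫ = 0 := by
  have hiso : ⟪L d, L d⟫ = ⟪d, d⟫ := by rw [hskew, hL, inner_neg_right, neg_neg]
  have hcross : ⟪L d, d⟫ = ⟪d, L d⟫ := real_inner_comm _ _
  rw [inner_sub_left, inner_add_right, inner_add_right, hiso, hcross]
  ring

section Plane

variable {L : EuclideanSpace ℝ (Fin 2) → EuclideanSpace ℝ (Fin 2)}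
  (hL : ∀ p : EuclideanSpace ℝ (Fin 2), L p 0 = -(p 1) ∧ L p 1 = p 0)
include hL

theorem isLinearMap_of_rotation_coords : IsLinearMap ℝ L := by
  constructor
  · intro x y; ext i; fin_cases i <;> simp [hL, add_comm]
  · intro c x; ext i; fin_cases i <;> simp [hL]

theorem rotation_rotation_of_coords (p : EuclideanSpace ℝ (Fin 2)) : L (L p) = -p := by
  ext i; fin_cases i <;> simp [hL]

theorem inner_rotation_left_of_coords (p q : EuclideanSpace ℝ (Fin 2)) :
    ⟪L p, q⟫ = -⟪p, L q⟫ := by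
  simp [PiLp.inner_apply, Fin.sum_univ_two, hL]

end Plane

/-- In `ℝ²` with the rotator `L(x,y) = (-y,x)`, and
`A x = L x + a*`, `B x = -L x - b*`: (i) the `w`-perturbed problem for `(A,B)` is
solvable exactly for `w = ½(Id - L)(a* - b*)`, so `v(A,B) = ½(Id - L)(a* - b*)`;
(ii) for `(B,A)` exactly for `w = ½(Id + L)(a* - b*)`, so `v(B,A) = ½(Id + L)(a* - b*)`;
(iii) `⟪v(A,B), v(B,A)⟫ = 0`, and both are nonzero whenever `a* ≠ b*`. -/
theorem stmt17 (a b : EuclideanSpace ℝ (Fin 2))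
    (L : EuclideanSpace ℝ (Fin 2) → EuclideanSpace ℝ (Fin 2))
    (hL : ∀ p : EuclideanSpace ℝ (Fin 2), L p 0 = -(p 1) ∧ L p 1 = p 0)
    (A B : EuclideanSpace ℝ (Fin 2) → EuclideanSpace ℝ (Fin 2))
    (hA : ∀ x, A x = L x + a) (hB : ∀ x, B x = -(L x) - b) :
    ({w : EuclideanSpace ℝ (Fin 2) | ∃ x, w = A (x - w) + B x}
        = {(2 : ℝ)⁻¹ • ((a - b) - L (a - b))}) ∧
    ({w : EuclideanSpace ℝ (Fin 2) | ∃ x, w = B (x - w) + A x}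
        = {(2 : ℝ)⁻¹ • ((a - b) + L (a - b))}) ∧
    ⟪(2 : ℝ)⁻¹ • ((a - b) - L (a - b)), (2 : ℝ)⁻¹ • ((a - b) + L (a - b))⟫ = 0 ∧
    (a ≠ b →
      (2 : ℝ)⁻¹ • ((a - b) - L (a - b)) ≠ 0 ∧
      (2 : ℝ)⁻¹ • ((a - b) + L (a - b)) ≠ 0) := by
  set R := IsLinearMap.mk' L (isLinearMap_of_rotation_coords hL)
  have hRR : ∀ p, R (R p) = -p := rotation_rotation_of_coords hL
  have horth : ⟪(a - b) - L (a - b), (a - b) + L (a - b)⟫ = 0 :=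
    inner_sub_apply_add_apply_of_skew R hRR (inner_rotation_left_of_coords hL) (a - b)
  refine ⟨perturbedSolvableSet_eq_of_sq_eq_neg R hRR hA hB,
    perturbedSolvableSet_swap_eq_of_sq_eq_neg R hRR hA hB, ?_, fun hab => ?_⟩
  · rw [inner_smul_left, inner_smul_right, horth, mul_zero, mul_zero]
  · have hd : a - b ≠ 0 := sub_ne_zero.mpr hab
    exact ⟨smul_ne_zero (by norm_num) (sub_apply_ne_zero_of_sq_eq_neg R hRR hd),
      smul_ne_zero (by norm_num) (add_apply_ne_zero_of_sq_eq_neg R hRR hd)⟩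
end

section
/- Let X = ℝⁿ with the standard (Euclidean) inner product, let M : X → X be a linear operator with ⟨M x, x⟩ ≥ 0 for all x (i.e., M + Mᵀ positive semidefinite), and let b ∈ X. Define A x = −b (a constant single-valued operator) and B x = M x. Then: (i) Id + M is bijective; let J := (Id + M)⁻¹ and define the Douglas–Rachford operator of (A,B) by T x = J x + b (which equals J_A(2 J x − x) + x − J x with J_A y = y + b). Then x − T x = M(J x) − b for all x, and the range of Id − T equals {M y − b : y ∈ X} = range(M) − b; (ii) the minimal-norm element of this set is v := P_{range M}(b) − b, where P_{range M} is the orthogonal projection onto the subspace range(M); and (iii) for x ∈ X, one has M x − b = v (i.e., x is a normal solution) if and only if ‖M x − b‖ ≤ ‖M y − b‖ for all y ∈ X, i.e., the normal solutions are precisely the classical least squares solutions of M x = b. -/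
open scoped RealInnerProductSpace

/-! Since `⟪M x, x⟫ ≥ 0`, `(Id + M) x = 0` forces `‖x‖² ≤ 0`, so `Id + M` is injective and hence,
in finite dimension, bijective; the Douglas–Rachford identities are then algebra. Parts (ii) and
(iii) are Pythagoras for `P = P_{range M}`: for `w ∈ range M`,
`‖w - b‖² = ‖w - P b‖² + ‖P b - b‖²`, so `w = P b` is the unique minimiser of `‖w - b‖` on `range M`. -/

section Monotone

variable {E : Type*} [NormedAddCommGroup E] [InnerProductSpace ℝ E]

theorem LinearMap.injective_add_apply_self_of_monotone {M : E →ₗ[ℝ] E}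
    (hM : ∀ x, 0 ≤ ⟪M x, x⟫) : Function.Injective (fun x => x + M x) := by
  refine (injective_iff_map_eq_zero (LinearMap.id + M)).mpr fun x hx => ?_
  have hx' : ‖x‖ ^ 2 + ⟪M x, x⟫ = 0 := by
    simpa [inner_add_left, real_inner_self_eq_norm_sq] using congrArg (⟪·, x⟫) hx
  exact norm_eq_zero.mp (by nlinarith [hM x, norm_nonneg x])

theorem LinearMap.bijective_add_apply_self_of_monotone [FiniteDimensional ℝ E] {M : E →ₗ[ℝ] E}
    (hM : ∀ x, 0 ≤ ⟪M x, x⟫) : Function.Bijective (fun x => x + M x) :=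
  let hinj := injective_add_apply_self_of_monotone hM
  ⟨hinj, (LinearMap.injective_iff_surjective (f := LinearMap.id + M)).mp hinj⟩

end Monotone

namespace Submodule

variable {E : Type*} [NormedAddCommGroup E] [InnerProductSpace ℝ E]
  (K : Submodule ℝ E) [K.HasOrthogonalProjection] {w : E} (b : E)

theorem norm_sub_sq_eq_norm_sub_starProjection_sq_add (hw : w ∈ K) :
    ‖w - b‖ ^ 2 = ‖w - K.starProjection b‖ ^ 2 + ‖K.starProjection b - b‖ ^ 2 := by
  have hperp : ⟪w - K.starProjection b, K.starProjection b - b⟫ = 0 := by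
    rw [← neg_sub b, inner_neg_right, neg_eq_zero]
    exact K.sub_starProjection_mem_orthogonal b _ (K.sub_mem hw (K.starProjection_apply_mem b))
  have hpyth := norm_add_sq_eq_norm_sq_add_norm_sq_real hperp
  rw [sub_add_sub_cancel] at hpyth
  simpa only [sq] using hpyth

theorem norm_starProjection_sub_le (hw : w ∈ K) : ‖K.starProjection b - b‖ ≤ ‖w - b‖ := by
  have hsq := K.norm_sub_sq_eq_norm_sub_starProjection_sq_add b hw
  exact le_of_sq_le_sq (by nlinarith [sq_nonneg ‖w - K.starProjection b‖]) (norm_nonneg _)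

theorem eq_starProjection_of_norm_sub_le (hw : w ∈ K)
    (h : ‖w - b‖ ≤ ‖K.starProjection b - b‖) : w = K.starProjection b := by
  have hsq := K.norm_sub_sq_eq_norm_sub_starProjection_sq_add b hw
  have hdist : ‖w - K.starProjection b‖ ^ 2 ≤ 0 := by nlinarith [norm_nonneg (w - b)]
  exact sub_eq_zero.mp (norm_eq_zero.mp (by nlinarith [norm_nonneg (w - K.starProjection b)]))

end Submodule

/-- In `ℝⁿ` with monotone linear `M` and `b ∈ ℝⁿ`, for the pair
`A ≡ -b`, `B = M`: (i) `Id + M` is bijective, and with `J = (Id + M)⁻¹` the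
Douglas–Rachford operator is `T x = J x + b`, with `x - T x = M (J x) - b` and
`ran (Id - T) = ran M - b`; (ii) the minimal-norm element of `ran M - b` is
`v = P_{ran M} b - b`; (iii) the normal solutions (`M x - b = v`) are precisely the
classical least squares solutions of `M x = b`. -/
theorem stmt19 {n : ℕ} (M : EuclideanSpace ℝ (Fin n) →ₗ[ℝ] EuclideanSpace ℝ (Fin n))
    (hM : ∀ x, 0 ≤ ⟪M x, x⟫) (b : EuclideanSpace ℝ (Fin n)) :
    Function.Bijective (fun x => x + M x) ∧
    (∀ J : EuclideanSpace ℝ (Fin n) → EuclideanSpace ℝ (Fin n),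
      (∀ y, J y + M (J y) = y) →
      ((∀ x, (2 • J x - x + b) + x - J x = J x + b) ∧
       (∀ x, x - (J x + b) = M (J x) - b) ∧
       {y | ∃ x, y = x - (J x + b)} = {y | ∃ x, y = M x - b})) ∧
    (((LinearMap.range M).orthogonalProjectionOnto b : EuclideanSpace ℝ (Fin n)) - b
        ∈ {y | ∃ x, y = M x - b} ∧
      ∀ s ∈ {y : EuclideanSpace ℝ (Fin n) | ∃ x, y = M x - b},
        ‖((LinearMap.range M).orthogonalProjectionOnto b : EuclideanSpace ℝ (Fin n)) - b‖ ≤ ‖s‖) ∧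
    (∀ x, (M x - b
        = ((LinearMap.range M).orthogonalProjectionOnto b : EuclideanSpace ℝ (Fin n)) - b)
      ↔ ∀ y, ‖M x - b‖ ≤ ‖M y - b‖) := by
  simp only [Submodule.coe_orthogonalProjectionOnto_apply]
  set K := LinearMap.range M
  have hbij := M.bijective_add_apply_self_of_monotone hM
  obtain ⟨x₀, hx₀⟩ : K.starProjection b ∈ K := K.starProjection_apply_mem b
  refine ⟨hbij, fun J hJ => ?_, ⟨⟨x₀, by rw [hx₀]⟩, ?_⟩, fun x => ⟨fun h y => ?_, fun h => ?_⟩⟩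
  · have hresidual : ∀ x, x - (J x + b) = M (J x) - b := fun x => by
      nth_rewrite 1 [← hJ x]
      abel
    have hJleft : Function.LeftInverse J (fun x => x + M x) :=
      Function.RightInverse.leftInverse_of_injective hJ hbij.injective
    refine ⟨fun x => by abel, hresidual, Set.ext fun y => ⟨?_, ?_⟩⟩
    · rintro ⟨x, rfl⟩
      exact ⟨J x, hresidual x⟩
    · rintro ⟨x, rfl⟩
      exact ⟨x + M x, by rw [hresidual, hJleft x]⟩
  · rintro s ⟨y, rfl⟩
    exact K.norm_starProjection_sub_le b ⟨y, rfl⟩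
  · exact h ▸ K.norm_starProjection_sub_le b ⟨y, rfl⟩
  · rw [K.eq_starProjection_of_norm_sub_le b ⟨x, rfl⟩ (hx₀ ▸ h x₀)]
end
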